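/- arXiv:2211.14407 — 2 statements merged into one kernel-verified Lean document; each statement's English description precedes it below -/
import Mathlib

section
/- Let ε ∈ (0,1). Let w* ∈ ℝ^n_{≥0} be an exact minimizer of f(w) = Σ_i w_i − log det(Σ_i w_i a_i a_iᵀ) − d over nonnegative w (with Q* := Σ_i w*_i a_i a_iᵀ positive definite), and let E* = {x ∈ ℝ^d : xᵀQ*x ≤ 1}. Let w ∈ ℝ^n_{≥0} be a (1+ε)-approximate solution with Q = Σ_i w_i a_i a_iᵀ positive definite and E = {x ∈ ℝ^d : xᵀQx ≤ 1}. Then the Lebesgue volume satisfies vol((1/√(1+ε))·E) ≥ exp(−dε/2)·vol(E*). -/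
open Matrix Finset Pointwise MeasureTheory

/-- `Q(w) = Σᵢ wᵢ aᵢ aᵢᵀ`, where `aᵢᵀ` is the `i`-th row of `A`. -/
noncomputable def Qmat {n d : ℕ} (A : Matrix (Fin n) (Fin d) ℝ) (w : Fin n → ℝ) :
    Matrix (Fin d) (Fin d) ℝ :=
  ∑ i : Fin n, w i • vecMulVec (A i) (A i)

/-- The objective of the John ellipsoid program:
`f(w) = Σᵢ wᵢ − log det(Σᵢ wᵢ aᵢ aᵢᵀ) − d`. -/
noncomputable def johnObj {n d : ℕ} (A : Matrix (Fin n) (Fin d) ℝ) (w : Fin n → ℝ) : ℝ :=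
  (∑ i : Fin n, w i) - Real.log (Qmat A w).det - d

lemma posDef_smul' {d : ℕ} {M : Matrix (Fin d) (Fin d) ℝ} (hM : M.PosDef) {t : ℝ}
    (ht : 0 < t) : (t • M).PosDef := by
  constructor
  · unfold Matrix.IsHermitian
    rw [conjTranspose_smul, star_trivial, hM.1]
  · intro x hx
    exact (hM.smul ht).2 hx

lemma Qmat_smul {n d : ℕ} (A : Matrix (Fin n) (Fin d) ℝ) (w : Fin n → ℝ) (t : ℝ) :
    Qmat A (t • w) = t • Qmat A w := by
  unfold Qmat
  rw [Finset.smul_sum]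
  refine Finset.sum_congr rfl fun i _ => ?_
  rw [Pi.smul_apply, smul_eq_mul, mul_smul]

open scoped MatrixOrder in
lemma ellipsoid_vol (d : ℕ) (Q : Matrix (Fin d) (Fin d) ℝ) (hQ : Q.PosDef) :
    volume {x : Fin d → ℝ | x ⬝ᵥ (Q *ᵥ x) ≤ 1} =
      ENNReal.ofReal (Real.sqrt Q.det)⁻¹ * volume {z : Fin d → ℝ | z ⬝ᵥ z ≤ 1} := by
  set R := CFC.sqrt Q with hRdef
  have hRR : R * R = Q := CFC.sqrt_mul_sqrt_self Q hQ.posSemidef.nonneg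
  have hRsym : Rᵀ = R := by
    rw [← Matrix.conjTranspose_eq_transpose_of_trivial]
    exact (Matrix.nonneg_iff_posSemidef.mp (CFC.sqrt_nonneg Q)).1
  have hdetR : 0 ≤ R.det := by
    rw [(Matrix.nonneg_iff_posSemidef.mp (CFC.sqrt_nonneg Q)).1.det_eq_prod_eigenvalues]
    exact Finset.prod_nonneg fun i _ =>
      (Matrix.nonneg_iff_posSemidef.mp (CFC.sqrt_nonneg Q)).eigenvalues_nonneg i
  have hdetsq : R.det * R.det = Q.det := by rw [← det_mul, hRR]
  have hdetQ : 0 < Q.det := hQ.det_pos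
  have hdetRpos : 0 < R.det := by
    rcases hdetR.lt_or_eq with h | h
    · exact h
    · exfalso; rw [← h, mul_zero] at hdetsq; exact hdetQ.ne (hdetsq)
  have hsqrt : Real.sqrt Q.det = R.det := by
    rw [← hdetsq, ← pow_two, Real.sqrt_sq hdetR]
  have hinv : IsUnit R.det := hdetRpos.ne'.isUnit
  have hquad : ∀ x : Fin d → ℝ, x ⬝ᵥ (Q *ᵥ x) = (R *ᵥ x) ⬝ᵥ (R *ᵥ x) := by
    intro x
    rw [← hRR, ← mulVec_mulVec, dotProduct_mulVec, ← Matrix.mulVec_transpose, hRsym]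
  have himg : (Matrix.toLin' R⁻¹) '' {z : Fin d → ℝ | z ⬝ᵥ z ≤ 1}
      = {x : Fin d → ℝ | x ⬝ᵥ (Q *ᵥ x) ≤ 1} := by
    ext y
    simp only [Set.mem_image, Set.mem_setOf_eq, Matrix.toLin'_apply]
    constructor
    · rintro ⟨z, hz, rfl⟩
      rw [hquad, mulVec_mulVec, Matrix.mul_nonsing_inv _ hinv, one_mulVec]
      exact hz
    · intro hy
      exact ⟨R *ᵥ y, by rw [← hquad]; exact hy,
        by rw [mulVec_mulVec, Matrix.nonsing_inv_mul _ hinv, one_mulVec]⟩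
  rw [← himg, Measure.addHaar_image_linearMap, LinearMap.det_toLin',
    Matrix.det_nonsing_inv, Ring.inverse_eq_inv', hsqrt, abs_of_nonneg (inv_nonneg.mpr hdetRpos.le)]

/-- The volume of the shrunk ellipsoid obtained from a `(1+ε)`-approximate solution is
at least `exp(−dε/2)` times the volume of the exact John ellipsoid. -/
theorem approx_john_ellipsoid_volume_lower_bound
    (n d : ℕ) (A : Matrix (Fin n) (Fin d) ℝ) (hrank : A.rank = d)
    (ε : ℝ) (hε : ε ∈ Set.Ioo (0 : ℝ) 1)
    (wstar : Fin n → ℝ) (hwstar : ∀ i, 0 ≤ wstar i) (hQstar : (Qmat A wstar).PosDef)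
    (hmin : ∀ w' : Fin n → ℝ, (∀ i, 0 ≤ w' i) → (Qmat A w').PosDef →
      johnObj A wstar ≤ johnObj A w')
    (w : Fin n → ℝ) (hw : ∀ i, 0 ≤ w i) (hQ : (Qmat A w).PosDef)
    (hsum : (∑ i : Fin n, w i) = (d : ℝ))
    (happrox : ∀ j : Fin n, A j ⬝ᵥ ((Qmat A w)⁻¹ *ᵥ A j) ≤ 1 + ε) :
    ENNReal.ofReal (Real.exp (-(d * ε) / 2)) *
        volume {x : Fin d → ℝ | x ⬝ᵥ (Qmat A wstar *ᵥ x) ≤ 1} ≤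
      volume ((1 / Real.sqrt (1 + ε)) • {x : Fin d → ℝ | x ⬝ᵥ (Qmat A w *ᵥ x) ≤ 1}) := by
  obtain ⟨hε0, hε1⟩ := hε
  have h1ε : (0:ℝ) < 1 + ε := by linarith
  have hsq : (0:ℝ) < Real.sqrt (1 + ε) := Real.sqrt_pos.mpr h1ε
  -- determinant comparison
  have hdetQ : 0 < (Qmat A w).det := hQ.det_pos
  have hdetQs : 0 < (Qmat A wstar).det := hQstar.det_pos
  have hdet : (Qmat A w).det ≤ (Qmat A wstar).det := by
    rcases Nat.eq_zero_or_pos d with hd | hd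
    · haveI : IsEmpty (Fin d) := by rw [hd]; exact Fin.isEmpty'
      simp [Matrix.det_isEmpty]
    · have hdr : (0:ℝ) < d := Nat.cast_pos.mpr hd
      -- first show ∑ wstar = d
      set S := ∑ i : Fin n, wstar i with hSdef
      have hS0 : 0 < S := by
        rcases (Finset.sum_nonneg fun i _ => hwstar i : (0:ℝ) ≤ S).lt_or_eq with h | h
        · exact h
        · exfalso
          have hz : ∀ i ∈ Finset.univ, wstar i = 0 :=
            (Finset.sum_eq_zero_iff_of_nonneg fun i _ => hwstar i).mp h.symm
          have : Qmat A wstar = 0 := by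
            unfold Qmat
            refine Finset.sum_eq_zero fun i _ => by rw [hz i (Finset.mem_univ i), zero_smul]
          rw [this] at hQstar
          have := hQstar.det_pos
          rw [(have := Fin.pos_iff_nonempty.mp hd; Matrix.det_zero)] at this
          exact lt_irrefl 0 this
      have hSd : S = d := by
        by_contra hne
        set t : ℝ := d / S with htdef
        have ht : 0 < t := div_pos hdr hS0
        have hpd : (Qmat A (t • wstar)).PosDef := by
          rw [Qmat_smul]; exact posDef_smul' hQstar ht
        have h2 := hmin (t • wstar) (fun i => mul_nonneg ht.le (hwstar i)) hpd
        unfold johnObj at h2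
        rw [Qmat_smul, Matrix.det_smul] at h2
        have hsum' : ∑ i : Fin n, (t • wstar) i = t * S := by
          simp only [Pi.smul_apply, smul_eq_mul, ← Finset.mul_sum]
          rfl
        rw [hsum'] at h2
        rw [Real.log_mul (by positivity) hdetQs.ne', Real.log_pow] at h2
        have htS : t * S = d := div_mul_cancel₀ _ hS0.ne'
        rw [htS] at h2
        simp only [Fintype.card_fin] at h2
        -- h2 : S - log detQs - d ≤ d - (d * log t + log detQs) - d
        have hlogt : Real.log t = - Real.log (S / d) := by
          rw [htdef, ← Real.log_inv, inv_div]
        have hx : (0:ℝ) < S / d := div_pos hS0 hdr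
        have hxne : S / d ≠ 1 := by
          intro h; apply hne; field_simp at h; linarith
        have hlt := Real.log_lt_sub_one_of_pos hx hxne
        have := mul_lt_mul_of_pos_left hlt hdr
        rw [hlogt] at h2
        have hSd' : (d:ℝ) * (S / d - 1) = S - d := by field_simp
        nlinarith
      have h1 := hmin w hw hQ
      unfold johnObj at h1
      rw [hsum, ← hSdef, hSd] at h1
      have hlog : Real.log (Qmat A w).det ≤ Real.log (Qmat A wstar).det := by linarith
      exact (Real.log_le_log_iff hdetQ hdetQs).mp hlog
  -- volumes
  rw [Measure.addHaar_smul, ellipsoid_vol d _ hQ, ellipsoid_vol d _ hQstar]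
  have hfr : Module.finrank ℝ (Fin d → ℝ) = d := by simp
  rw [hfr, abs_of_nonneg (by positivity : (0:ℝ) ≤ (1 / Real.sqrt (1 + ε)) ^ d)]
  rw [← mul_assoc, ← mul_assoc, ← ENNReal.ofReal_mul (Real.exp_pos _).le,
    ← ENNReal.ofReal_mul (by positivity)]
  refine mul_le_mul_left (ENNReal.ofReal_le_ofReal ?_) _
  have h1 : Real.sqrt (Qmat A w).det ≤ Real.sqrt (Qmat A wstar).det := Real.sqrt_le_sqrt hdet
  have hinv : (Real.sqrt (Qmat A wstar).det)⁻¹ ≤ (Real.sqrt (Qmat A w).det)⁻¹ := by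
    exact inv_anti₀ (Real.sqrt_pos.mpr hdetQ) h1
  have hexp : Real.exp (-(d * ε) / 2) ≤ (1 / Real.sqrt (1 + ε)) ^ d := by
    have he : Real.exp (-(d * ε) / 2) = (Real.exp (-ε / 2)) ^ d := by
      rw [← Real.exp_nat_mul]; congr 1; push_cast; ring
    rw [he]
    refine pow_le_pow_left₀ (Real.exp_pos _).le ?_ d
    have hs1 : Real.sqrt (1 + ε) ≤ Real.exp (ε / 2) := by
      rw [Real.exp_half]
      exact Real.sqrt_le_sqrt (by linarith [Real.add_one_le_exp ε])
    rw [neg_div, Real.exp_neg, one_div]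
    exact inv_anti₀ hsq hs1
  calc Real.exp (-(d * ε) / 2) * (Real.sqrt (Qmat A wstar).det)⁻¹
      ≤ (1 / Real.sqrt (1 + ε)) ^ d * (Real.sqrt (Qmat A w).det)⁻¹ :=
        mul_le_mul hexp hinv (by positivity) (by positivity)
end

section
/- Let n > d ≥ 1 and define w_1,…,w_T ∈ ℝ^n by w_{1,i} = d/n for all i ∈ [n] and the exact fixed-point iteration w_{k+1,i} = w_{k,i}·σ_i(w_k) for k ∈ {1,…,T−1}. Let u = (1/T)·Σ_{k=1}^T w_k. Then for every i ∈ [n], φ_i(u) ≤ (1/T)·log(n/d). -/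
open Matrix Finset

/-- `σᵢ(v) = aᵢᵀ (Σⱼ vⱼ aⱼ aⱼᵀ)⁻¹ aᵢ`, where `aᵢᵀ` is the `i`-th row of `A`. -/
noncomputable def sigmaFn {n d : ℕ} (A : Matrix (Fin n) (Fin d) ℝ) (v : Fin n → ℝ)
    (i : Fin n) : ℝ :=
  A i ⬝ᵥ ((∑ j : Fin n, v j • vecMulVec (A j) (A j))⁻¹ *ᵥ A i)

noncomputable def Mmat {n d : ℕ} (A : Matrix (Fin n) (Fin d) ℝ) (v : Fin n → ℝ) :
    Matrix (Fin d) (Fin d) ℝ :=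
  ∑ j : Fin n, v j • vecMulVec (A j) (A j)

lemma dot_Mmat {n d : ℕ} (A : Matrix (Fin n) (Fin d) ℝ) (v : Fin n → ℝ) (x y : Fin d → ℝ) :
    y ⬝ᵥ (Mmat A v *ᵥ x) = ∑ j : Fin n, v j * ((A j ⬝ᵥ y) * (A j ⬝ᵥ x)) := by
  simp only [Mmat, Matrix.mulVec, dotProduct, Matrix.sum_apply, Matrix.smul_apply,
    vecMulVec_apply, smul_eq_mul, Finset.mul_sum, Finset.sum_mul]
  refine (Finset.sum_congr rfl fun i1 _ => Finset.sum_comm).trans ?_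
  rw [Finset.sum_comm]
  refine Finset.sum_congr rfl fun j _ => ?_
  rw [Finset.sum_comm]
  refine Finset.sum_congr rfl fun i2 _ => Finset.sum_congr rfl fun i1 _ => by ring

lemma mulVec_inj {n d : ℕ} {A : Matrix (Fin n) (Fin d) ℝ} (hrank : A.rank = d)
    {x : Fin d → ℝ} (hx : A *ᵥ x = 0) : x = 0 := by
  have h := LinearMap.finrank_range_add_finrank_ker A.mulVecLin
  rw [Matrix.rank] at hrank
  rw [hrank, Module.finrank_pi] at h
  simp only [Fintype.card_fin] at h
  have hker : LinearMap.ker A.mulVecLin = ⊥ := by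
    rw [← Submodule.finrank_eq_zero (R := ℝ)]
    omega
  have : A.mulVecLin x = 0 := hx
  simpa using (LinearMap.ker_eq_bot.mp hker) (by simpa using this)

lemma Mmat_posDef {n d : ℕ} {A : Matrix (Fin n) (Fin d) ℝ} (hrank : A.rank = d)
    {v : Fin n → ℝ} (hv : ∀ j, 0 < v j) : (Mmat A v).PosDef := by
  refine posDef_iff_dotProduct_mulVec.mpr ⟨?_, ?_⟩
  · unfold Matrix.IsHermitian
    ext i j
    simp only [Mmat, conjTranspose_apply, Matrix.sum_apply, Matrix.smul_apply,
      vecMulVec_apply, smul_eq_mul, star_trivial]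
    exact Finset.sum_congr rfl fun k _ => by ring
  · intro x hx
    have hx' : (star x) ⬝ᵥ (Mmat A v *ᵥ x) = ∑ j : Fin n, v j * (A j ⬝ᵥ x) ^ 2 := by
      rw [show (star x : Fin d → ℝ) = x from funext fun i => star_trivial _, dot_Mmat]
      exact Finset.sum_congr rfl fun j _ => by ring
    rw [hx']
    have hAx : A *ᵥ x ≠ 0 := fun h => hx (mulVec_inj hrank h)
    obtain ⟨j, hj⟩ : ∃ j, A j ⬝ᵥ x ≠ 0 := by
      by_contra h
      push_neg at h
      exact hAx (funext fun j => h j)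
    refine Finset.sum_pos' (fun k _ => mul_nonneg (hv k).le (sq_nonneg _)) ⟨j, Finset.mem_univ j, ?_⟩
    have := hv j
    positivity

lemma sigmaFn_eq {n d : ℕ} (A : Matrix (Fin n) (Fin d) ℝ) (v : Fin n → ℝ) (i : Fin n) :
    sigmaFn A v i = A i ⬝ᵥ ((Mmat A v)⁻¹ *ᵥ A i) := rfl

lemma Mmat_inv_mulVec {n d : ℕ} {A : Matrix (Fin n) (Fin d) ℝ} (hrank : A.rank = d)
    {v : Fin n → ℝ} (hv : ∀ j, 0 < v j) (c : Fin d → ℝ) :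
    Mmat A v *ᵥ ((Mmat A v)⁻¹ *ᵥ c) = c := by
  rw [Matrix.mulVec_mulVec, Matrix.mul_nonsing_inv _ (Mmat_posDef hrank hv).det_pos.ne'.isUnit,
    Matrix.one_mulVec]

lemma sigmaFn_pos {n d : ℕ} {A : Matrix (Fin n) (Fin d) ℝ} (hrank : A.rank = d)
    {v : Fin n → ℝ} (hv : ∀ j, 0 < v j) {i : Fin n} (ha : A i ≠ 0) :
    0 < sigmaFn A v i := by
  have h := ((Mmat_posDef hrank hv).inv).dotProduct_mulVec_pos ha
  rw [sigmaFn_eq]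
  simpa [show (star (A i) : Fin d → ℝ) = A i from funext fun _ => star_trivial _] using h

/-- `Q v x = xᵀ M(v) x` as an explicit sum. -/
noncomputable def Qf {n d : ℕ} (A : Matrix (Fin n) (Fin d) ℝ) (v : Fin n → ℝ)
    (x : Fin d → ℝ) : ℝ :=
  ∑ j : Fin n, v j * (A j ⬝ᵥ x) ^ 2

lemma cs_key {n d : ℕ} {A : Matrix (Fin n) (Fin d) ℝ} (hrank : A.rank = d)
    {v : Fin n → ℝ} (hv : ∀ j, 0 < v j) (i : Fin n) (x : Fin d → ℝ) :
    (A i ⬝ᵥ x) ^ 2 ≤ sigmaFn A v i * Qf A v x := by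
  set y := (Mmat A v)⁻¹ *ᵥ A i with hy
  have hMy : Mmat A v *ᵥ y = A i := Mmat_inv_mulVec hrank hv _
  have h1 : A i ⬝ᵥ x = ∑ j : Fin n, v j * ((A j ⬝ᵥ y) * (A j ⬝ᵥ x)) := by
    calc A i ⬝ᵥ x = x ⬝ᵥ A i := dotProduct_comm _ _
      _ = x ⬝ᵥ (Mmat A v *ᵥ y) := by rw [hMy]
      _ = ∑ j : Fin n, v j * ((A j ⬝ᵥ x) * (A j ⬝ᵥ y)) := dot_Mmat A v y x
      _ = _ := Finset.sum_congr rfl fun j _ => by ring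
  have hQy : Qf A v y = sigmaFn A v i := by
    have : Qf A v y = y ⬝ᵥ (Mmat A v *ᵥ y) := by
      rw [dot_Mmat]
      exact Finset.sum_congr rfl fun j _ => by ring
    rw [this, hMy, sigmaFn_eq, ← hy, dotProduct_comm]
  have hcs := Finset.sum_mul_sq_le_sq_mul_sq Finset.univ
    (fun j => Real.sqrt (v j) * (A j ⬝ᵥ y)) (fun j => Real.sqrt (v j) * (A j ⬝ᵥ x))
  have e1 : ∀ j : Fin n, (Real.sqrt (v j) * (A j ⬝ᵥ y)) * (Real.sqrt (v j) * (A j ⬝ᵥ x))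
      = v j * ((A j ⬝ᵥ y) * (A j ⬝ᵥ x)) := fun j => by
    rw [show (Real.sqrt (v j) * (A j ⬝ᵥ y)) * (Real.sqrt (v j) * (A j ⬝ᵥ x))
        = (Real.sqrt (v j) * Real.sqrt (v j)) * ((A j ⬝ᵥ y) * (A j ⬝ᵥ x)) by ring,
      Real.mul_self_sqrt (hv j).le]
  have e2 : ∀ (z : Fin d → ℝ) (j : Fin n), (Real.sqrt (v j) * (A j ⬝ᵥ z)) ^ 2
      = v j * (A j ⬝ᵥ z) ^ 2 := fun z j => by
    rw [mul_pow, Real.sq_sqrt (hv j).le]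
  calc (A i ⬝ᵥ x) ^ 2
      = (∑ j : Fin n, (Real.sqrt (v j) * (A j ⬝ᵥ y)) * (Real.sqrt (v j) * (A j ⬝ᵥ x))) ^ 2 := by
        rw [h1]; congr 1; exact Finset.sum_congr rfl fun j _ => (e1 j).symm
    _ ≤ (∑ j : Fin n, (Real.sqrt (v j) * (A j ⬝ᵥ y)) ^ 2)
        * (∑ j : Fin n, (Real.sqrt (v j) * (A j ⬝ᵥ x)) ^ 2) := hcs
    _ = Qf A v y * Qf A v x := by
        congr 1 <;> exact Finset.sum_congr rfl fun j _ => e2 _ j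
    _ = sigmaFn A v i * Qf A v x := by rw [hQy]

lemma weight_sigma_le_one {n d : ℕ} {A : Matrix (Fin n) (Fin d) ℝ} (hrank : A.rank = d)
    {v : Fin n → ℝ} (hv : ∀ j, 0 < v j) {i : Fin n} (ha : A i ≠ 0) :
    v i * sigmaFn A v i ≤ 1 := by
  set y := (Mmat A v)⁻¹ *ᵥ A i with hy
  have hMy : Mmat A v *ᵥ y = A i := Mmat_inv_mulVec hrank hv _
  have hQy : Qf A v y = sigmaFn A v i := by
    have : Qf A v y = y ⬝ᵥ (Mmat A v *ᵥ y) := by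
      rw [dot_Mmat]
      exact Finset.sum_congr rfl fun j _ => by ring
    rw [this, hMy, sigmaFn_eq, ← hy, dotProduct_comm]
  have hsig : sigmaFn A v i = A i ⬝ᵥ y := sigmaFn_eq A v i
  have h1 : v i * (A i ⬝ᵥ y) ^ 2 ≤ Qf A v y := by
    refine Finset.single_le_sum (f := fun j => v j * (A j ⬝ᵥ y) ^ 2)
      (fun j _ => mul_nonneg (hv j).le (sq_nonneg _)) (Finset.mem_univ i)
  have hspos := sigmaFn_pos hrank hv ha
  rw [hQy, ← hsig] at h1
  nlinarith [hv i, hspos]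

/-- Telescoping for the exact fixed point iteration: if `w₁ = (d/n)·𝟏` and
`w_{k+1,i} = w_{k,i}·σᵢ(w_k)`, then the average `u` of the first `T` iterates satisfies
`φᵢ(u) = log σᵢ(u) ≤ (1/T)·log(n/d)` for every `i`.
(The iterates are indexed by `k ∈ {0, …, T−1}` here.) -/
theorem telescoping_exact_iterates
    (n d T : ℕ) (hd : 1 ≤ d) (hdn : d < n) (hT : 0 < T)
    (A : Matrix (Fin n) (Fin d) ℝ) (hrank : A.rank = d) (ha : ∀ i : Fin n, A i ≠ 0)
    (w : ℕ → Fin n → ℝ)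
    (hinit : ∀ i, w 0 i = (d : ℝ) / n)
    (hrec : ∀ k, k + 1 < T → ∀ i, w (k + 1) i = w k i * sigmaFn A (w k) i)
    (u : Fin n → ℝ) (hu : u = fun i => (1 / (T : ℝ)) * ∑ k ∈ Finset.range T, w k i) :
    ∀ i : Fin n, Real.log (sigmaFn A u i) ≤ (1 / (T : ℝ)) * Real.log ((n : ℝ) / d) := by
  intro i
  have hdpos : (0:ℝ) < d := by exact_mod_cast hd
  have hnpos : (0:ℝ) < n := by exact_mod_cast Nat.pos_of_ne_zero (by omega)
  have hTpos : (0:ℝ) < T := by exact_mod_cast hT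
  -- positivity of the iterates
  have hwpos : ∀ k, k < T → ∀ j, 0 < w k j := by
    intro k
    induction k with
    | zero => intro _ j; rw [hinit]; positivity
    | succ k ih =>
      intro hk j
      have hk' : k < T := Nat.lt_of_succ_lt hk
      rw [hrec k hk j]
      exact mul_pos (ih hk' j) (sigmaFn_pos hrank (ih hk') (ha j))
  have hupos : ∀ j, 0 < u j := by
    intro j
    rw [hu]
    exact mul_pos (by positivity)
      (Finset.sum_pos (fun k hk => hwpos k (Finset.mem_range.mp hk) j)
        ⟨0, Finset.mem_range.mpr hT⟩)
  set x := (Mmat A u)⁻¹ *ᵥ A i with hx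
  set s := sigmaFn A u i with hs
  have hspos : 0 < s := sigmaFn_pos hrank hupos (ha i)
  have hax : A i ⬝ᵥ x = s := (sigmaFn_eq A u i).symm
  have hQu : Qf A u x = s := by
    have h1 : Qf A u x = x ⬝ᵥ (Mmat A u *ᵥ x) := by
      rw [dot_Mmat]
      exact Finset.sum_congr rfl fun j _ => by ring
    rw [h1, hx, Mmat_inv_mulVec hrank hupos, dotProduct_comm, ← hx, hax]
  -- linearity of Q in v
  have hQlin : Qf A u x = ∑ k ∈ Finset.range T, (1 / (T:ℝ)) * Qf A (w k) x := by
    unfold Qf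
    rw [hu]
    have h1 : ∀ j : Fin n,
        ((1 / (T:ℝ)) * ∑ k ∈ Finset.range T, w k j) * (A j ⬝ᵥ x) ^ 2
          = ∑ k ∈ Finset.range T, (1 / (T:ℝ)) * (w k j * (A j ⬝ᵥ x) ^ 2) := by
      intro j
      rw [mul_assoc, Finset.sum_mul, Finset.mul_sum]
    calc (∑ j : Fin n, ((1 / (T:ℝ)) * ∑ k ∈ Finset.range T, w k j) * (A j ⬝ᵥ x) ^ 2)
        = ∑ j : Fin n, ∑ k ∈ Finset.range T, (1 / (T:ℝ)) * (w k j * (A j ⬝ᵥ x) ^ 2) :=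
          Finset.sum_congr rfl fun j _ => h1 j
      _ = ∑ k ∈ Finset.range T, ∑ j : Fin n, (1 / (T:ℝ)) * (w k j * (A j ⬝ᵥ x) ^ 2) :=
          Finset.sum_comm
      _ = ∑ k ∈ Finset.range T, (1 / (T:ℝ)) * ∑ j : Fin n, w k j * (A j ⬝ᵥ x) ^ 2 := by
          exact Finset.sum_congr rfl fun k _ => (Finset.mul_sum _ _ _).symm
  -- Cauchy–Schwarz bound for each iterate
  have hcs : ∀ k, k < T → s ^ 2 ≤ sigmaFn A (w k) i * Qf A (w k) x := by
    intro k hk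
    have := cs_key hrank (hwpos k hk) i x
    rwa [hax] at this
  have hsig : ∀ k, k < T → 0 < sigmaFn A (w k) i :=
    fun k hk => sigmaFn_pos hrank (hwpos k hk) (ha i)
  have hqpos : ∀ k, k < T → 0 < Qf A (w k) x := by
    intro k hk
    nlinarith [hcs k hk, hsig k hk, hspos]
  -- Jensen for log
  have hjensen : ∑ k ∈ Finset.range T, (1 / (T:ℝ)) • Real.log (Qf A (w k) x)
      ≤ Real.log (∑ k ∈ Finset.range T, (1 / (T:ℝ)) • Qf A (w k) x) := by
    refine (strictConcaveOn_log_Ioi.concaveOn).le_map_sum (fun k _ => by positivity) ?_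
      (fun k hk => hqpos k (Finset.mem_range.mp hk))
    rw [Finset.sum_const, Finset.card_range, nsmul_eq_mul]
    field_simp
  simp only [smul_eq_mul] at hjensen
  have hjensen' : ∑ k ∈ Finset.range T, (1 / (T:ℝ)) * Real.log (Qf A (w k) x)
      ≤ Real.log s := by
    calc ∑ k ∈ Finset.range T, (1 / (T:ℝ)) * Real.log (Qf A (w k) x)
        ≤ Real.log (∑ k ∈ Finset.range T, (1 / (T:ℝ)) * Qf A (w k) x) := hjensen
      _ = Real.log s := by rw [← hQlin, hQu]
  -- per-iterate log bound
  have hklog : ∀ k ∈ Finset.range T,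
      2 * Real.log s - Real.log (Qf A (w k) x) ≤ Real.log (sigmaFn A (w k) i) := by
    intro k hk
    have hk' := Finset.mem_range.mp hk
    have hq := hqpos k hk'
    have hdiv : s ^ 2 / Qf A (w k) x ≤ sigmaFn A (w k) i :=
      (div_le_iff₀ hq).mpr (hcs k hk')
    have := Real.log_le_log (by positivity) hdiv
    rwa [Real.log_div (by positivity) hq.ne', Real.log_pow, Nat.cast_ofNat] at this
  -- telescoping
  have htel : ∑ k ∈ Finset.range T, Real.log (sigmaFn A (w k) i) ≤ Real.log ((n:ℝ)/d) := by
    obtain ⟨T', rfl⟩ : ∃ T', T = T' + 1 := ⟨T - 1, by omega⟩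
    rw [Finset.sum_range_succ]
    have hstep : ∀ k ∈ Finset.range T', Real.log (sigmaFn A (w k) i)
        = Real.log (w (k+1) i) - Real.log (w k i) := by
      intro k hk
      have hk' := Finset.mem_range.mp hk
      have h1 := hrec k (by omega) i
      have h2 : 0 < w k i := hwpos k (by omega) i
      have h3 : 0 < sigmaFn A (w k) i := hsig k (by omega)
      rw [h1, Real.log_mul h2.ne' h3.ne']
      ring
    rw [Finset.sum_congr rfl hstep, Finset.sum_range_sub (fun k => Real.log (w k i))]
    have h4 : 0 < w T' i := hwpos T' (by omega) i
    have h5 : w T' i * sigmaFn A (w T') i ≤ 1 :=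
      weight_sigma_le_one hrank (hwpos T' (by omega)) (ha i)
    have h6 : Real.log (w T' i * sigmaFn A (w T') i) ≤ 0 :=
      Real.log_nonpos (mul_nonneg h4.le (hsig T' (by omega)).le) h5
    rw [Real.log_mul h4.ne' (hsig T' (by omega)).ne'] at h6
    have h7 : Real.log (w 0 i) = Real.log ((d:ℝ)) - Real.log ((n:ℝ)) := by
      rw [hinit, Real.log_div hdpos.ne' hnpos.ne']
    have h8 : Real.log ((n:ℝ)/d) = Real.log ((n:ℝ)) - Real.log ((d:ℝ)) :=
      Real.log_div hnpos.ne' hdpos.ne'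
    linarith
  -- assemble
  have e : ∑ k ∈ Finset.range T, (1 / (T:ℝ)) * (2 * Real.log s - Real.log (Qf A (w k) x))
      = 2 * Real.log s - ∑ k ∈ Finset.range T, (1 / (T:ℝ)) * Real.log (Qf A (w k) x) := by
    simp only [mul_sub]
    rw [Finset.sum_sub_distrib, Finset.sum_const, Finset.card_range, nsmul_eq_mul]
    have : (T:ℝ) * ((1 / (T:ℝ)) * (2 * Real.log s)) = 2 * Real.log s := by
      field_simp
    rw [this]
  have halg : Real.log s ≤ ∑ k ∈ Finset.range T,
      (1 / (T:ℝ)) * (2 * Real.log s - Real.log (Qf A (w k) x)) := by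
    rw [e]
    linarith [hjensen']
  have hstep2 : ∑ k ∈ Finset.range T,
      (1 / (T:ℝ)) * (2 * Real.log s - Real.log (Qf A (w k) x))
      ≤ (1 / (T:ℝ)) * ∑ k ∈ Finset.range T, Real.log (sigmaFn A (w k) i) := by
    rw [Finset.mul_sum]
    refine Finset.sum_le_sum fun k hk => ?_
    exact mul_le_mul_of_nonneg_left (hklog k hk) (by positivity)
  calc Real.log s
      ≤ (1 / (T:ℝ)) * ∑ k ∈ Finset.range T, Real.log (sigmaFn A (w k) i) :=
        halg.trans hstep2
    _ ≤ (1 / (T:ℝ)) * Real.log ((n:ℝ)/d) :=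
        mul_le_mul_of_nonneg_left htel (by positivity)
end
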